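/- Let Λ_L = 4Lℤ × 2Lℤ × 2Lℤ and S(z) = (z₁² − z₂²)/|z|⁵. The lattice sum c(L) := fint_{Q_0} S(z) dz − Σ_{y ∈ Λ_L∖{0}} ( S(y) − fint_{Q_y} S(z) dz ), with Q_y = y + [−2L,2L]×[−L,L]², converges absolutely and satisfies the scaling relation c(L) = c(1/2) · (1/(2L))³ for every L > 0. In other words, L³ c(L) is independent of L. -/

import Mathlib

/-!
`S` is homogeneous of degree `-3`, while the lattice `Λ_L` and the cells `Q_y` scale linearly
in `L`; hence every term of `c(L)` is `(2L)⁻³` times the corresponding term at `L = 1/2`.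

For `L = 1/2`, `S(y) - ⨍_{Q_y} S` is the cell average of `S(y) - S(z)`. Once `|y| ≥ 3` the cell
stays in the region `|y - z| ≤ |y|/2`, where `|S(y) - S(z)| ≲ |y - z| / |y|⁴`, so the term is
`O(|y|⁻⁴)`. This is summable over a rank-three lattice, and the finitely many lattice points
with `|y| < 3` do not affect summability.
-/

open MeasureTheory Real Set
open scoped BigOperators

noncomputable section

abbrev E3 := EuclideanSpace ℝ (Fin 3)

def S (z : E3) : ℝ := (z 0 ^ 2 - z 1 ^ 2) / ‖z‖ ^ 5

/-- The lattice point of `Λ_L = 4Lℤ × 2Lℤ × 2Lℤ` indexed by `m`. -/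
def lattL (L : ℝ) (m : ℤ × ℤ × ℤ) : E3 :=
  (WithLp.equiv 2 (Fin 3 → ℝ)).symm ![4 * L * (m.1 : ℝ), 2 * L * (m.2.1 : ℝ), 2 * L * (m.2.2 : ℝ)]

/-- The cell `Q_y = y + [−2L,2L] × [−L,L]²` (volume `16L³`). -/
def QL (L : ℝ) (y : E3) : Set E3 :=
  {z | z 0 ∈ Icc (y 0 - 2 * L) (y 0 + 2 * L) ∧ z 1 ∈ Icc (y 1 - L) (y 1 + L) ∧
    z 2 ∈ Icc (y 2 - L) (y 2 + L)}

/-- The cell-corrected term `S(y) − fint_{Q_y} S`. -/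
def termL (L : ℝ) (y : E3) : ℝ := S y - (1 / (16 * L ^ 3)) * ∫ z in QL L y, S z

/-- The lattice sum `c(L) = fint_{Q_0} S − Σ_{y ∈ Λ_L∖{0}} (S(y) − fint_{Q_y} S)`. -/
def cL (L : ℝ) : ℝ :=
  (1 / (16 * L ^ 3)) * (∫ z in QL L 0, S z)
    - ∑' m : {m : ℤ × ℤ × ℤ // m ≠ 0}, termL L (lattL L m.1)

open scoped Pointwise

lemma S_smul {c : ℝ} (hc : 0 < c) (z : E3) : S (c • z) = (c ^ 3)⁻¹ * S z := by
  rcases eq_or_ne z 0 with rfl | hz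
  · simp [S]
  · have : ‖z‖ ≠ 0 := norm_ne_zero_iff.mpr hz
    simp only [S, PiLp.smul_apply, smul_eq_mul, norm_smul, Real.norm_of_nonneg hc.le]
    field_simp

lemma QL_mul_smul {c : ℝ} (hc : 0 < c) (L : ℝ) (y : E3) : QL (c * L) (c • y) = c • QL L y := by
  ext z
  simp only [QL, mem_ofPred_eq, Set.mem_smul_set_iff_inv_smul_mem₀ hc.ne', PiLp.smul_apply,
    smul_eq_mul, mem_Icc, le_inv_mul_iff₀ hc, inv_mul_le_iff₀ hc]
  constructor <;> rintro ⟨⟨h1, h2⟩, ⟨h3, h4⟩, h5, h6⟩ <;>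
    exact ⟨⟨by linarith, by linarith⟩, ⟨by linarith, by linarith⟩, by linarith, by linarith⟩

lemma setIntegral_QL_mul_smul {c : ℝ} (hc : 0 < c) (L : ℝ) (y : E3) :
    ∫ z in QL (c * L) (c • y), S z = ∫ z in QL L y, S z := by
  have h := Measure.setIntegral_comp_smul_of_pos (volume : Measure E3) S (QL L y) hc
  simp only [S_smul hc, integral_const_mul, finrank_euclideanSpace_fin, smul_eq_mul] at h
  rw [QL_mul_smul hc]
  exact (mul_left_cancel₀ (by positivity) h).symm

lemma termL_mul_smul {c : ℝ} (hc : 0 < c) (L : ℝ) (y : E3) :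
    termL (c * L) (c • y) = (c ^ 3)⁻¹ * termL L y := by
  simp only [termL, S_smul hc, setIntegral_QL_mul_smul hc]
  ring

lemma lattL_mul (c L : ℝ) (m : ℤ × ℤ × ℤ) : lattL (c * L) m = c • lattL L m := by
  ext i
  fin_cases i <;> simp [lattL] <;> ring

lemma termL_lattL_mul {c : ℝ} (hc : 0 < c) (L : ℝ) (m : ℤ × ℤ × ℤ) :
    termL (c * L) (lattL (c * L) m) = (c ^ 3)⁻¹ * termL L (lattL L m) := by
  rw [lattL_mul, termL_mul_smul hc]

lemma cL_mul {c : ℝ} (hc : 0 < c) (L : ℝ) : cL (c * L) = (c ^ 3)⁻¹ * cL L := by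
  have hQ : QL (c * L) 0 = QL (c * L) (c • 0) := by rw [smul_zero]
  simp only [cL, hQ, setIntegral_QL_mul_smul hc, termL_lattL_mul hc, tsum_mul_left]
  ring

lemma Summable.abs_termL_lattL_mul {c L : ℝ} (hc : 0 < c)
    (h : Summable fun m : {m : ℤ × ℤ × ℤ // m ≠ 0} => |termL L (lattL L m.1)|) :
    Summable fun m : {m : ℤ × ℤ × ℤ // m ≠ 0} => |termL (c * L) (lattL (c * L) m.1)| := by
  simpa only [termL_lattL_mul hc, abs_mul, abs_of_pos (inv_pos.2 (pow_pos hc 3))]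
    using h.mul_left (c ^ 3)⁻¹

lemma abs_apply_le_norm (z : E3) (i : Fin 3) : |z i| ≤ ‖z‖ :=
  PiLp.norm_apply_le z i

lemma QL_eq_preimage_Icc (L : ℝ) (y : E3) :
    QL L y = WithLp.ofLp ⁻¹'
      Icc (WithLp.ofLp y - ![2 * L, L, L]) (WithLp.ofLp y + ![2 * L, L, L]) := by
  ext z
  simp only [QL, mem_ofPred_eq, mem_preimage, mem_Icc, Pi.le_def, Fin.forall_fin_succ,
    Pi.add_apply, Pi.sub_apply, Matrix.cons_val_zero, Matrix.cons_val_succ, IsEmpty.forall_iff]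
  exact ⟨fun ⟨⟨h1, h2⟩, ⟨h3, h4⟩, h5, h6⟩ => ⟨⟨h1, h3, h5, trivial⟩, h2, h4, h6, trivial⟩,
    fun ⟨⟨h1, h3, h5, _⟩, h2, h4, h6, _⟩ => ⟨⟨h1, h2⟩, ⟨h3, h4⟩, h5, h6⟩⟩

lemma isCompact_QL (L : ℝ) (y : E3) : IsCompact (QL L y) := by
  rw [QL_eq_preimage_Icc]
  exact (PiLp.continuousLinearEquiv 2 ℝ (fun _ : Fin 3 => ℝ)).toHomeomorph.isCompact_preimage.2
    isCompact_Icc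

lemma measureReal_QL {L : ℝ} (hL : 0 ≤ L) (y : E3) : volume.real (QL L y) = 16 * L ^ 3 := by
  rw [measureReal_def, QL_eq_preimage_Icc,
    (PiLp.volume_preserving_ofLp (Fin 3)).measure_preimage measurableSet_Icc.nullMeasurableSet,
    Real.volume_Icc_pi, Fin.prod_univ_three]
  simp only [Pi.add_apply, Pi.sub_apply, add_sub_sub_cancel, Matrix.cons_val_zero,
    Matrix.cons_val_one, Matrix.cons_val_two, Matrix.head_cons, Matrix.tail_cons]
  rw [← ENNReal.ofReal_mul (by positivity), ← ENNReal.ofReal_mul (by positivity),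
    ENNReal.toReal_ofReal (by positivity)]
  ring

lemma continuousOn_S : ContinuousOn S {0}ᶜ :=
  ContinuousOn.div (by fun_prop) (by fun_prop)
    fun _ hz => pow_ne_zero _ (norm_ne_zero_iff.2 hz)

lemma integrableOn_S_QL {L : ℝ} {y : E3} (h : (0 : E3) ∉ QL L y) : IntegrableOn S (QL L y) :=
  (continuousOn_S.mono fun _ hz h0 => h (h0 ▸ hz)).integrableOn_compact (isCompact_QL L y)

lemma abs_termL_le {L : ℝ} (hL : 0 < L) {y : E3} {C : ℝ} (hS : IntegrableOn S (QL L y))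
    (hC : ∀ z ∈ QL L y, |S y - S z| ≤ C) : |termL L y| ≤ C := by
  have hvol := measureReal_QL hL.le y
  have hfin : volume (QL L y) < ⊤ := (isCompact_QL L y).measure_lt_top
  have hV : 0 < 16 * L ^ 3 := by positivity
  have hmean : termL L y = (16 * L ^ 3)⁻¹ * ∫ z in QL L y, (S y - S z) := by
    rw [integral_sub (integrableOn_const (C := S y) hfin.ne) hS, setIntegral_const, hvol, termL,
      smul_eq_mul]
    field_simp
  have hint : |∫ z in QL L y, (S y - S z)| ≤ C * (16 * L ^ 3) := by
    simpa only [hvol, Real.norm_eq_abs] using norm_setIntegral_le_of_norm_le_const hfin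
      fun z hz => (Real.norm_eq_abs _).trans_le (hC z hz)
  rw [hmean, abs_mul, abs_inv, abs_of_pos hV, inv_mul_le_iff₀ hV]
  linarith

lemma abs_sq_sub_sq_le_norm_sq (z : E3) : |z 0 ^ 2 - z 1 ^ 2| ≤ ‖z‖ ^ 2 := by
  have h0 := sq_le_sq.2 ((abs_apply_le_norm z 0).trans (le_abs_self _))
  have h1 := sq_le_sq.2 ((abs_apply_le_norm z 1).trans (le_abs_self _))
  exact abs_le.2 ⟨by nlinarith [sq_nonneg (z 0)], by nlinarith [sq_nonneg (z 1)]⟩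

lemma abs_sq_sub_sq_sub_le (y z : E3) :
    |(y 0 ^ 2 - y 1 ^ 2) - (z 0 ^ 2 - z 1 ^ 2)| ≤ 2 * ‖y - z‖ * (‖y‖ + ‖z‖) := by
  have hi : ∀ i, |y i ^ 2 - z i ^ 2| ≤ ‖y - z‖ * (‖y‖ + ‖z‖) := fun i => by
    rw [sq_sub_sq, abs_mul, mul_comm]
    exact mul_le_mul (abs_apply_le_norm (y - z) i)
      ((abs_add_le _ _).trans (add_le_add (abs_apply_le_norm y i) (abs_apply_le_norm z i)))
      (abs_nonneg _) (norm_nonneg _)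
  calc |(y 0 ^ 2 - y 1 ^ 2) - (z 0 ^ 2 - z 1 ^ 2)|
      = |(y 0 ^ 2 - z 0 ^ 2) - (y 1 ^ 2 - z 1 ^ 2)| := by ring_nf
    _ ≤ |y 0 ^ 2 - z 0 ^ 2| + |y 1 ^ 2 - z 1 ^ 2| := abs_sub _ _
    _ ≤ 2 * ‖y - z‖ * (‖y‖ + ‖z‖) := by linarith [hi 0, hi 1]

lemma abs_S_sub_S_le {y z : E3} (h : ‖y - z‖ ≤ ‖y‖ / 2) :
    |S y - S z| ≤ 208 * ‖y - z‖ / ‖y‖ ^ 4 := by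
  rcases eq_or_ne y 0 with rfl | hy
  · obtain rfl : z = 0 := norm_le_zero_iff.1 (by simpa using h)
    simp
  have ha : 0 < ‖y‖ := norm_pos_iff.2 hy
  obtain ⟨hab, hba⟩ := abs_le.1 ((abs_norm_sub_norm_le y z).trans h)
  have hb : 0 < ‖z‖ := by linarith
  have hsplit : S y - S z = ((y 0 ^ 2 - y 1 ^ 2) - (z 0 ^ 2 - z 1 ^ 2)) / ‖y‖ ^ 5
      + (z 0 ^ 2 - z 1 ^ 2) * (‖z‖ ^ 5 - ‖y‖ ^ 5) / (‖y‖ ^ 5 * ‖z‖ ^ 5) := by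
    simp only [S]
    field_simp
    ring
  set a := ‖y‖
  set b := ‖z‖
  set d := ‖y - z‖
  have hpow : |b ^ 5 - a ^ 5| ≤ 5 * d * (3 * a / 2) ^ 4 := by
    calc |b ^ 5 - a ^ 5| ≤ |b - a| * 5 * max |b| |a| ^ 4 := abs_pow_sub_pow_le ..
      _ ≤ d * 5 * (3 * a / 2) ^ 4 := by
        rw [abs_sub_comm, abs_of_pos ha, abs_of_pos hb]
        gcongr
        · exact abs_norm_sub_norm_le y z
        · exact max_le (by linarith) (by linarith)
      _ = 5 * d * (3 * a / 2) ^ 4 := by ring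
  have hnear : 2 * d * (a + b) / a ^ 5 ≤ 5 * d / a ^ 4 := by
    rw [div_le_div_iff₀ (by positivity) (by positivity)]
    have : 0 ≤ d := norm_nonneg _
    nlinarith [pow_pos ha 4, mul_nonneg this (pow_pos ha 4).le]
  have hfar : b ^ 2 * (5 * d * (3 * a / 2) ^ 4) / (a ^ 5 * b ^ 5) ≤ 203 * d / a ^ 4 := by
    have hb3 : a ^ 3 ≤ 8 * b ^ 3 := by
      have := pow_le_pow_left₀ (by positivity) (by linarith : a / 2 ≤ b) 3
      linarith [show (a / 2) ^ 3 = a ^ 3 / 8 by ring]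
    have hd : 0 ≤ d * (a ^ 5 * b ^ 5) := by positivity
    rw [div_le_div_iff₀ (by positivity) (by positivity)]
    calc b ^ 2 * (5 * d * (3 * a / 2) ^ 4) * a ^ 4 = 405 / 16 * (d * a ^ 5 * b ^ 2) * a ^ 3 := by
          ring
      _ ≤ 405 / 16 * (d * a ^ 5 * b ^ 2) * (8 * b ^ 3) := by gcongr
      _ ≤ 203 * d * (a ^ 5 * b ^ 5) := by linarith
  rw [hsplit]
  calc _ ≤ |(y 0 ^ 2 - y 1 ^ 2) - (z 0 ^ 2 - z 1 ^ 2)| / a ^ 5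
        + |z 0 ^ 2 - z 1 ^ 2| * |b ^ 5 - a ^ 5| / (a ^ 5 * b ^ 5) := by
        refine (abs_add_le _ _).trans_eq ?_
        rw [abs_div, abs_div, abs_mul, abs_of_pos (by positivity : 0 < a ^ 5),
          abs_of_pos (by positivity : 0 < a ^ 5 * b ^ 5)]
    _ ≤ 2 * d * (a + b) / a ^ 5 + b ^ 2 * (5 * d * (3 * a / 2) ^ 4) / (a ^ 5 * b ^ 5) := by
        gcongr
        · exact abs_sq_sub_sq_sub_le y z
        · exact abs_sq_sub_sq_le_norm_sq z
    _ ≤ 5 * d / a ^ 4 + 203 * d / a ^ 4 := add_le_add hnear hfar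
    _ = 208 * d / a ^ 4 := by ring

lemma norm_sub_le_of_mem_QL_half {y z : E3} (hz : z ∈ QL (1 / 2) y) : ‖y - z‖ ≤ 3 / 2 := by
  obtain ⟨⟨h1, h2⟩, ⟨h3, h4⟩, h5, h6⟩ := hz
  refine (pow_le_pow_iff_left₀ (norm_nonneg _) (by norm_num) two_ne_zero).1 ?_
  simp only [EuclideanSpace.norm_sq_eq, Fin.sum_univ_three, Real.norm_eq_abs, sq_abs,
    PiLp.sub_apply]
  nlinarith

lemma abs_termL_half_le {y : E3} (hy : 3 ≤ ‖y‖) : |termL (1 / 2) y| ≤ 312 / ‖y‖ ^ 4 := by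
  have h0 : (0 : E3) ∉ QL (1 / 2) y := fun h0 => by
    have := norm_sub_le_of_mem_QL_half h0
    rw [sub_zero] at this
    linarith
  refine abs_termL_le (by norm_num) (integrableOn_S_QL h0) fun z hz => ?_
  have hd := norm_sub_le_of_mem_QL_half hz
  calc |S y - S z| ≤ 208 * ‖y - z‖ / ‖y‖ ^ 4 := abs_S_sub_S_le (by linarith)
    _ ≤ 208 * (3 / 2) / ‖y‖ ^ 4 := by gcongr
    _ = 312 / ‖y‖ ^ 4 := by norm_num

lemma lattL_injective {L : ℝ} (hL : L ≠ 0) : Function.Injective (lattL L) := by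
  intro m m' h
  have h0 := congrArg (fun y : E3 => y 0) h
  have h1 := congrArg (fun y : E3 => y 1) h
  have h2 := congrArg (fun y : E3 => y 2) h
  simp [lattL, hL] at h0 h1 h2
  ext <;> assumption

lemma norm_le_norm_lattL_half (m : ℤ × ℤ × ℤ) : ‖m‖ ≤ ‖lattL (1 / 2) m‖ := by
  have h0 := abs_apply_le_norm (lattL (1 / 2) m) 0
  have h1 := abs_apply_le_norm (lattL (1 / 2) m) 1
  have h2 := abs_apply_le_norm (lattL (1 / 2) m) 2
  simp only [Prod.norm_def, Int.norm_eq_abs]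
  simp [lattL] at h0 h1 h2 ⊢
  exact ⟨by linarith [abs_nonneg (m.1 : ℝ)], h1, h2⟩

lemma tendsto_norm_lattL_half :
    Filter.Tendsto (fun m : ℤ × ℤ × ℤ => ‖lattL (1 / 2) m‖) Filter.cofinite Filter.atTop := by
  refine Filter.tendsto_atTop_mono norm_le_norm_lattL_half ?_
  rw [← Filter.cocompact_eq_cofinite]
  exact tendsto_norm_cocompact_atTop

lemma summable_norm_lattL_half_inv_pow :
    Summable fun m : ℤ × ℤ × ℤ => ‖lattL (1 / 2) m‖⁻¹ ^ 4 := by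
  -- `b = (2e₀, e₁, e₂)`, so that `Λ_{1/2}` is the `ℤ`-span of `b`
  let b := (EuclideanSpace.basisFun (Fin 3) ℝ).toBasis.unitsSMul ![Units.mk0 2 two_ne_zero, 1, 1]
  have hb : ∀ m : ℤ × ℤ × ℤ, lattL (1 / 2) m = m.1 • b 0 + m.2.1 • b 1 + m.2.2 • b 2 := by
    intro m
    ext i
    fin_cases i <;> simp [lattL, b, Module.Basis.unitsSMul_apply]; ring
  let φ : ℤ × ℤ × ℤ → Submodule.span ℤ (Set.range b) := fun m =>
    ⟨lattL (1 / 2) m, by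
      rw [hb]
      exact add_mem (add_mem (Submodule.smul_mem _ _ (Submodule.subset_span ⟨0, rfl⟩))
        (Submodule.smul_mem _ _ (Submodule.subset_span ⟨1, rfl⟩)))
        (Submodule.smul_mem _ _ (Submodule.subset_span ⟨2, rfl⟩))⟩
  have hφ : Function.Injective φ := fun m m' h =>
    lattL_injective one_half_pos.ne' (congrArg Subtype.val h)
  have hrank : Module.finrank ℤ (Submodule.span ℤ (Set.range b)) < 4 := by
    rw [ZLattice.rank ℝ, finrank_euclideanSpace_fin]
    norm_num
  exact ((ZLattice.summable_norm_pow_inv _ 4 hrank).comp_injective hφ :)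

lemma summable_abs_termL_lattL_half :
    Summable fun m : ℤ × ℤ × ℤ => |termL (1 / 2) (lattL (1 / 2) m)| := by
  refine .of_norm_bounded_eventually (summable_norm_lattL_half_inv_pow.mul_left 312) ?_
  filter_upwards [tendsto_norm_lattL_half.eventually_ge_atTop 3] with m hm
  simpa [div_eq_mul_inv] using abs_termL_half_le hm

/-- the lattice sum `c(L)` converges absolutely for every `L > 0` and
satisfies the scaling relation `c(L) = c(1/2)·(1/(2L))³`, i.e. `L³c(L)` is constant. -/
theorem stmt9 :
    (∀ L > (0:ℝ), Summable (fun m : {m : ℤ × ℤ × ℤ // m ≠ 0} => |termL L (lattL L m.1)|)) ∧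
    (∀ L > (0:ℝ), cL L = cL (1/2) * (1 / (2 * L)) ^ 3) := by
  have hL2 (L : ℝ) : 2 * L * (1 / 2) = L := by ring
  refine ⟨fun L hL => ?_, fun L hL => ?_⟩
  · have h : Summable fun m : {m : ℤ × ℤ × ℤ // m ≠ 0} => |termL (1 / 2) (lattL (1 / 2) m.1)| :=
      summable_abs_termL_lattL_half.comp_injective Subtype.val_injective
    simpa only [hL2] using h.abs_termL_lattL_mul (c := 2 * L) (by positivity)
  · rw [← hL2 L, cL_mul (by positivity)]
    ring
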